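/- Consequently, if the Fundamental Identity T A - A T* = u v* - v u* holds and the block matrix [[(I-zT)A(I-conj(z)T*), u w - v],[conj(w)u* - v*, (w-conj(w))/(z-conj z)]] is positive semidefinite for some z ∈ ℂ \ ℝ and w ∈ ℂ, then the matrix [[(I-conj(z)T)A(I-zT*), u conj(w) - v],[w u* - v*, (w-conj(w))/(z-conj z)]] is also positive semidefinite (i.e., the FMI at z implies the FMI at conj(z) with w replaced by conj(w)). -/

import Mathlib

open Matrix ComplexOrder

/-! With `ζ = z - z̄` and `ρ = (w - w̄)/ζ`, the FMI matrix at `(z̄, w̄)` is the congruence `Kᴴ M K`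
of the FMI matrix `M` at `(z, w)` by `K = [[1, 0], [ζ uᴴ, 1]]`: the off-diagonal blocks change by
`ρ ζ u = (w - w̄) u`, and the top-left block changes by `ζ (u vᴴ - v uᴴ) = ζ (T A - A Tᴴ)`, which is
exactly the difference `(1 - z̄ T) A (1 - z Tᴴ) - (1 - z T) A (1 - z̄ Tᴴ)`. Congruence preserves
positive semidefiniteness. -/

theorem one_sub_smul_mul_mul_one_sub_smul_swap {R α : Type*} [CommRing R] [Ring α] [Algebra R α]
    (b c : R) (t a s : α) :
    (1 - b • t) * a * (1 - c • s) = (1 - c • t) * a * (1 - b • s) + (c - b) • (t * a - a * s) := by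
  simp only [sub_mul, mul_sub, one_mul, mul_one, smul_mul_assoc, mul_smul_comm]
  module

namespace Matrix

variable {R m o : Type*} [CommRing R] [StarRing R] [Fintype m] [Fintype o] [DecidableEq m]
  [DecidableEq o]

theorem conjTranspose_fromBlocks_one_zero_mul_fromBlocks_mul
    (P : Matrix m m R) (u v : Matrix m o R) {ζ ρ w : R} (hζ : starRingEnd R ζ = -ζ)
    (hρ : ρ * ζ = w - starRingEnd R w) :
    (fromBlocks 1 0 (ζ • uᴴ) 1)ᴴ *
        fromBlocks P (w • u - v) (starRingEnd R w • uᴴ - vᴴ) (ρ • 1) *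
        fromBlocks 1 0 (ζ • uᴴ) 1 =
      fromBlocks (P + ζ • (u * vᴴ - v * uᴴ)) (starRingEnd R w • u - v) (w • uᴴ - vᴴ) (ρ • 1) := by
  rw [starRingEnd_apply] at hζ
  simp only [fromBlocks_conjTranspose, fromBlocks_multiply, conjTranspose_one,
    conjTranspose_zero, conjTranspose_smul, conjTranspose_conjTranspose, hζ, fromBlocks_inj,
    Matrix.add_mul, Matrix.sub_mul, Matrix.mul_sub, Matrix.one_mul, Matrix.mul_one,
    Matrix.smul_mul, Matrix.mul_smul, Matrix.zero_mul, Matrix.mul_zero, neg_smul, Matrix.neg_mul,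
    zero_add]
  refine ⟨?_, ?_, ?_, ?_⟩
  · linear_combination (norm := module) (-ζ) • hρ • (u * uᴴ : Matrix m m R)
  · linear_combination (norm := module) (-hρ) • u
  · linear_combination (norm := module) hρ • uᴴ
  · simp

end Matrix

theorem fmi_at_z_implies_fmi_at_conj_general (n : ℕ)
    (A T : Matrix (Fin n) (Fin n) ℂ)
    (u v : Matrix (Fin n) (Fin 1) ℂ)
    (hFI : T * A - A * Tᴴ = u * vᴴ - v * uᴴ)
    (z : ℂ) (hz : z.im ≠ 0) (w : ℂ)
    (hPSD : (Matrix.fromBlocks ((1 - z • T) * A * (1 - (starRingEnd ℂ) z • Tᴴ)) (w • u - v)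
      ((starRingEnd ℂ) w • uᴴ - vᴴ)
      (((w - (starRingEnd ℂ) w) / (z - (starRingEnd ℂ) z)) •
        (1 : Matrix (Fin 1) (Fin 1) ℂ))).PosSemidef) :
    (Matrix.fromBlocks ((1 - (starRingEnd ℂ) z • T) * A * (1 - z • Tᴴ))
      ((starRingEnd ℂ) w • u - v) (w • uᴴ - vᴴ)
      (((w - (starRingEnd ℂ) w) / (z - (starRingEnd ℂ) z)) •
        (1 : Matrix (Fin 1) (Fin 1) ℂ))).PosSemidef := by
  have hζ : z - starRingEnd ℂ z ≠ 0 := by simpa [Complex.sub_conj] using hz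
  have hζ_conj : starRingEnd ℂ (z - starRingEnd ℂ z) = -(z - starRingEnd ℂ z) := by simp
  rw [one_sub_smul_mul_mul_one_sub_smul_swap, hFI,
    ← conjTranspose_fromBlocks_one_zero_mul_fromBlocks_mul _ u v hζ_conj (div_mul_cancel₀ _ hζ)]
  exact hPSD.conjTranspose_mul_mul_same _

theorem fmi_at_z_implies_fmi_at_conj (n : ℕ)
    (A T : Matrix (Fin n) (Fin n) ℂ) (hA : A.IsHermitian)
    (u v : Matrix (Fin n) (Fin 1) ℂ)
    (hFI : T * A - A * Tᴴ = u * vᴴ - v * uᴴ)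
    (z : ℂ) (hz : z.im ≠ 0) (w : ℂ)
    (hPSD : (Matrix.fromBlocks ((1 - z • T) * A * (1 - (starRingEnd ℂ) z • Tᴴ)) (w • u - v)
      ((starRingEnd ℂ) w • uᴴ - vᴴ)
      (((w - (starRingEnd ℂ) w) / (z - (starRingEnd ℂ) z)) •
        (1 : Matrix (Fin 1) (Fin 1) ℂ))).PosSemidef) :
    (Matrix.fromBlocks ((1 - (starRingEnd ℂ) z • T) * A * (1 - z • Tᴴ))
      ((starRingEnd ℂ) w • u - v) (w • uᴴ - vᴴ)
      (((w - (starRingEnd ℂ) w) / (z - (starRingEnd ℂ) z)) •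
        (1 : Matrix (Fin 1) (Fin 1) ℂ))).PosSemidef :=
  fmi_at_z_implies_fmi_at_conj_general n A T u v hFI z hz w hPSD
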